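/- arXiv:2408.03792 — 2 statements merged into one kernel-verified Lean document; each statement's English description precedes it below -/
import Mathlib

section
/- For all natural numbers n and k with 0 ≤ k ≤ n-1 (and n ≥ 1), the binomial coefficients satisfy (C(n,k))^2 ≥ C(n-1,k) · C(n+1,k). -/
/-!
Log-concavity of `n ↦ C(n, k)`. The ratio identity `C(n + 1, k) * (n + 1 - k) = C(n, k) * (n + 1)`,
applied at `n` and `n + 1`, gives
`C(n, k) * C(n + 2, k) * ((n + 1) * (n + 2 - k)) = C(n + 1, k) ^ 2 * ((n + 1 - k) * (n + 2))`,
and `(n + 1 - k) * (n + 2) ≤ (n + 1) * (n + 2 - k)` because the two sides differ by `k`.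
-/

namespace Nat

theorem sub_mul_add_two_le_mul_sub {n k : ℕ} (hk : k ≤ n) :
    (n + 1 - k) * (n + 2) ≤ (n + 1) * (n + 2 - k) := by
  obtain ⟨j, rfl⟩ := Nat.exists_eq_add_of_le hk
  rw [show k + j + 2 - k = j + 2 by omega, show k + j + 1 - k = j + 1 by omega]
  nlinarith

theorem choose_mul_choose_add_two_le_sq (n k : ℕ) :
    n.choose k * (n + 2).choose k ≤ (n + 1).choose k ^ 2 := by
  rcases lt_or_ge n k with hnk | hkn
  · simp [Nat.choose_eq_zero_of_lt hnk]
  have key : n.choose k * (n + 2).choose k * ((n + 1) * (n + 2 - k)) =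
      (n + 1).choose k ^ 2 * ((n + 1 - k) * (n + 2)) := by
    calc n.choose k * (n + 2).choose k * ((n + 1) * (n + 2 - k))
        = (n.choose k * (n + 1)) * ((n + 2).choose k * (n + 2 - k)) := by ring
      _ = ((n + 1).choose k * (n + 1 - k)) * ((n + 1).choose k * (n + 2)) := by
          rw [Nat.choose_mul_succ_eq n k, Nat.choose_mul_succ_eq (n + 1) k]
      _ = (n + 1).choose k ^ 2 * ((n + 1 - k) * (n + 2)) := by ring
  have hpos : 0 < (n + 1) * (n + 2 - k) := Nat.mul_pos n.succ_pos (by omega)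
  refine Nat.le_of_mul_le_mul_right ?_ hpos
  rw [key]
  exact Nat.mul_le_mul_left _ (sub_mul_add_two_le_mul_sub hkn)

end Nat

theorem choose_sq_ge_top_neighbors_general (n k : ℕ) (hn : 1 ≤ n) :
    (n - 1).choose k * (n + 1).choose k ≤ (n.choose k) ^ 2 := by
  obtain ⟨m, rfl⟩ := Nat.exists_eq_add_of_le' hn
  simpa using Nat.choose_mul_choose_add_two_le_sq m k

/-- For all natural numbers `n ≥ 1` and `k ≤ n - 1`, the binomial coefficients
satisfy `C(n,k)^2 ≥ C(n-1,k) * C(n+1,k)`. -/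
theorem choose_sq_ge_top_neighbors (n k : ℕ) (hn : 1 ≤ n) (hk : k ≤ n - 1) :
    (n - 1).choose k * (n + 1).choose k ≤ (n.choose k) ^ 2 :=
  choose_sq_ge_top_neighbors_general n k hn
end

section
/- For all natural numbers m1, m2, the Laurent polynomial ((x2+1)/x1)^{m1} · ((x1+x2+1)/(x1·x2))^{m2} in x1, x2 is log-concave. -/
/-- The Laurent monomial with exponent vector `d` and coefficient `1`,
as an element of the ring of multivariate Laurent polynomials
(the add-monoid algebra of `ℤ` over the group of exponent vectors). -/
noncomputable def Lmon (m : ℕ) (d : Fin m →₀ ℤ) : AddMonoidAlgebra ℤ (Fin m →₀ ℤ) :=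
  AddMonoidAlgebra.single d 1

/-- The Laurent monomial `xᵢ^e`. -/
noncomputable def LX (m : ℕ) (i : Fin m) (e : ℤ) : AddMonoidAlgebra ℤ (Fin m →₀ ℤ) :=
  Lmon m (Finsupp.single i e)

/-- A multivariate Laurent polynomial is log-concave if its coefficients are
nonnegative and, in each variable separately, the square of every coefficient is
at least the product of its two neighboring coefficients. -/
def IsLogConcave {m : ℕ} (f : AddMonoidAlgebra ℤ (Fin m →₀ ℤ)) : Prop :=
  (∀ d, 0 ≤ f.coeff d) ∧
  ∀ (j : Fin m) (d : Fin m →₀ ℤ),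
    f.coeff (d - Finsupp.single j 1) * f.coeff (d + Finsupp.single j 1) ≤ (f.coeff d) ^ 2

/-!
Up to a Laurent monomial the cluster monomial is `(1 + x₂) ^ m₁ * (1 + x₁ + x₂) ^ m₂`, whose
coefficient of `x₁ ^ a * x₂ ^ b` is `C(m₂, a) * C(m₁ + m₂ - a, b)`. Along every line parallel to a
coordinate axis this is a product of binomial coefficients in one of their two arguments, and a
binomial coefficient is log-concave in each argument; products of nonnegative log-concave
sequences are log-concave, and multiplying by a monomial only shifts exponents.
-/

theorem Nat.choose_mul_choose_add_two_le_sq_s10 (n k : ℕ) :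
    n.choose k * n.choose (k + 2) ≤ n.choose (k + 1) ^ 2 := by
  rcases le_or_gt n k with hnk | hkn
  · simp [Nat.choose_eq_zero_of_lt (show n < k + 2 by omega)]
  refine Nat.le_of_mul_le_mul_right ?_
    (show 0 < (k + 2) * (n - k) from Nat.mul_pos (by omega) (by omega))
  calc n.choose k * n.choose (k + 2) * ((k + 2) * (n - k))
      = n.choose k * (n - k) * (n.choose (k + 2) * (k + 2)) := by ring
    _ = n.choose (k + 1) ^ 2 * ((k + 1) * (n - (k + 1))) := by
        rw [← Nat.choose_succ_right_eq, Nat.choose_succ_right_eq n (k + 1)]; ring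
    _ ≤ n.choose (k + 1) ^ 2 * ((k + 2) * (n - k)) := by gcongr <;> omega

theorem Nat.choose_mul_add_two_choose_le_sq (n k : ℕ) :
    n.choose k * (n + 2).choose k ≤ (n + 1).choose k ^ 2 := by
  rcases lt_or_ge n k with hnk | hkn
  · simp [Nat.choose_eq_zero_of_lt hnk]
  refine Nat.le_of_mul_le_mul_right ?_
    (show 0 < (n + 1) * (n + 1 + 1 - k) from Nat.mul_pos (by omega) (by omega))
  calc n.choose k * (n + 2).choose k * ((n + 1) * (n + 1 + 1 - k))
      = n.choose k * (n + 1) * ((n + 1 + 1).choose k * (n + 1 + 1 - k)) := by ring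
    _ = (n + 1).choose k ^ 2 * ((n + 1 - k) * (n + 1 + 1)) := by
        rw [Nat.choose_mul_succ_eq n k, ← Nat.choose_mul_succ_eq (n + 1) k]; ring
    _ ≤ (n + 1).choose k ^ 2 * ((n + 1) * (n + 1 + 1 - k)) := by
        apply Nat.mul_le_mul_left
        zify [show k ≤ n + 1 by omega, show k ≤ n + 1 + 1 by omega]
        nlinarith

/-- Unlike `Ring.choose`, this vanishes for a negative upper index. -/
def binom (n k : ℤ) : ℤ :=
  if 0 ≤ n ∧ 0 ≤ k then n.toNat.choose k.toNat else 0

theorem binom_nonneg (n k : ℤ) : 0 ≤ binom n k := by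
  unfold binom; split <;> positivity

@[simp, norm_cast]
theorem binom_natCast (n k : ℕ) : binom n k = n.choose k := by
  simp [binom]

theorem binom_of_neg_left {n : ℤ} (hn : n < 0) (k : ℤ) : binom n k = 0 := by
  simp [binom]; omega

theorem binom_of_neg_right (n : ℤ) {k : ℤ} (hk : k < 0) : binom n k = 0 := by
  simp [binom]; omega

theorem binom_of_lt {n k : ℤ} (h : n < k) : binom n k = 0 := by
  unfold binom
  split_ifs with hnk
  · exact_mod_cast Nat.choose_eq_zero_of_lt (by omega)
  · rfl

theorem binom_zero_left (k : ℤ) : binom 0 k = if k = 0 then 1 else 0 := by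
  split_ifs with hk
  · simp [hk, binom]
  · rcases lt_or_gt_of_ne hk with hk | hk
    · exact binom_of_neg_right 0 hk
    · exact binom_of_lt hk

theorem binom_succ_left {n : ℤ} (hn : 0 ≤ n) (k : ℤ) :
    binom (n + 1) k = binom n (k - 1) + binom n k := by
  lift n to ℕ using hn
  rcases lt_or_ge k 1 with hk | hk
  · rw [binom_of_neg_right _ (by omega : k - 1 < 0), zero_add]
    rcases lt_or_ge k 0 with hk' | hk'
    · simp [binom_of_neg_right _ hk']
    · obtain rfl : k = 0 := by omega
      simp [binom]; omega
  · obtain ⟨i, rfl⟩ : ∃ i : ℕ, k = i + 1 := ⟨(k - 1).toNat, by omega⟩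
    rw [add_sub_cancel_right]
    exact_mod_cast Nat.choose_succ_succ' n i

theorem binom_mul_binom_sub_succ {q n : ℤ} (h : q ≤ n) (a b : ℤ) :
    binom q a * binom (n + 1 - a) b =
      binom q a * binom (n - a) (b - 1) + binom q a * binom (n - a) b := by
  by_cases hq : binom q a = 0
  · simp [hq]
  have ha : a ≤ q := not_lt.1 fun hqa => hq (binom_of_lt hqa)
  rw [show n + 1 - a = n - a + 1 by ring, binom_succ_left (by omega), mul_add]

def IsLogConcaveSeq (u : ℤ → ℤ) : Prop :=
  (∀ k, 0 ≤ u k) ∧ ∀ k, u (k - 1) * u (k + 1) ≤ u k ^ 2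

namespace IsLogConcaveSeq

variable {u v : ℤ → ℤ}

theorem const {c : ℤ} (hc : 0 ≤ c) : IsLogConcaveSeq fun _ => c :=
  ⟨fun _ => hc, fun _ => (sq c).ge⟩

theorem mul (hu : IsLogConcaveSeq u) (hv : IsLogConcaveSeq v) :
    IsLogConcaveSeq fun k => u k * v k := by
  refine ⟨fun k => mul_nonneg (hu.1 k) (hv.1 k), fun k => ?_⟩
  calc u (k - 1) * v (k - 1) * (u (k + 1) * v (k + 1))
      = u (k - 1) * u (k + 1) * (v (k - 1) * v (k + 1)) := by ring
    _ ≤ u k ^ 2 * v k ^ 2 :=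
        mul_le_mul (hu.2 k) (hv.2 k) (mul_nonneg (hv.1 _) (hv.1 _)) (sq_nonneg _)
    _ = (u k * v k) ^ 2 := by ring

theorem comp_add_left (hu : IsLogConcaveSeq u) (c : ℤ) : IsLogConcaveSeq fun k => u (c + k) :=
  ⟨fun k => hu.1 _, fun k => by simpa only [add_sub_assoc, add_assoc] using hu.2 (c + k)⟩

theorem comp_sub_left (hu : IsLogConcaveSeq u) (c : ℤ) : IsLogConcaveSeq fun k => u (c - k) :=
  ⟨fun k => hu.1 _, fun k => by
    simpa only [sub_sub, sub_add, mul_comm] using hu.2 (c - k)⟩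

end IsLogConcaveSeq

theorem isLogConcaveSeq_binom_right (n : ℤ) : IsLogConcaveSeq (binom n) := by
  refine ⟨binom_nonneg n, fun k => ?_⟩
  rcases lt_or_ge n 0 with hn | hn
  · simp [binom_of_neg_left hn]
  rcases lt_or_ge k 1 with hk | hk
  · simpa [binom_of_neg_right n (by omega : k - 1 < 0)] using sq_nonneg _
  lift n to ℕ using hn
  obtain ⟨i, rfl⟩ : ∃ i : ℕ, k = i + 1 := ⟨(k - 1).toNat, by omega⟩
  rw [add_sub_cancel_right, add_assoc, one_add_one_eq_two]
  exact_mod_cast Nat.choose_mul_choose_add_two_le_sq_s10 n i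

theorem isLogConcaveSeq_binom_left (k : ℤ) : IsLogConcaveSeq (binom · k) := by
  refine ⟨(binom_nonneg · k), fun n => ?_⟩
  dsimp only
  rcases lt_or_ge k 0 with hk | hk
  · simp [binom_of_neg_right _ hk]
  rcases lt_or_ge n 1 with hn | hn
  · simpa [binom_of_neg_left (by omega : n - 1 < 0)] using sq_nonneg _
  lift k to ℕ using hk
  obtain ⟨i, rfl⟩ : ∃ i : ℕ, n = i + 1 := ⟨(n - 1).toNat, by omega⟩
  rw [add_sub_cancel_right, add_assoc, one_add_one_eq_two]
  exact_mod_cast Nat.choose_mul_add_two_choose_le_sq i k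

section LaurentPolynomial

variable {m : ℕ}

theorem coeff_mul_Lmon (f : AddMonoidAlgebra ℤ (Fin m →₀ ℤ)) (e d : Fin m →₀ ℤ) :
    (f * Lmon m e).coeff d = f.coeff (d - e) := by
  simp [Lmon, sub_eq_add_neg]

theorem coeff_mul_LX_add_one (f : AddMonoidAlgebra ℤ (Fin m →₀ ℤ)) (j : Fin m)
    (d : Fin m →₀ ℤ) :
    (f * (LX m j 1 + 1)).coeff d = f.coeff (d - Finsupp.single j 1) + f.coeff d := by
  rw [mul_add, mul_one, AddMonoidAlgebra.coeff_add, Finsupp.add_apply, LX, coeff_mul_Lmon]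

theorem coeff_mul_LX_add_LX_add_one (f : AddMonoidAlgebra ℤ (Fin m →₀ ℤ)) (i j : Fin m)
    (d : Fin m →₀ ℤ) :
    (f * (LX m i 1 + LX m j 1 + 1)).coeff d =
      f.coeff (d - Finsupp.single i 1) + f.coeff (d - Finsupp.single j 1) + f.coeff d := by
  rw [add_assoc, mul_add, AddMonoidAlgebra.coeff_add, Finsupp.add_apply, coeff_mul_LX_add_one,
    LX, coeff_mul_Lmon, add_assoc]

theorem IsLogConcave.mul_Lmon {f : AddMonoidAlgebra ℤ (Fin m →₀ ℤ)} (hf : IsLogConcave f)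
    (e : Fin m →₀ ℤ) : IsLogConcave (f * Lmon m e) := by
  refine ⟨fun d => by simpa only [coeff_mul_Lmon] using hf.1 (d - e), fun j d => ?_⟩
  simpa only [coeff_mul_Lmon, sub_right_comm, add_sub_right_comm] using hf.2 j (d - e)

theorem isLogConcave_of_isLogConcaveSeq_coeff [NeZero m] {f : AddMonoidAlgebra ℤ (Fin m →₀ ℤ)}
    (h : ∀ j d, IsLogConcaveSeq fun t => f.coeff (d + Finsupp.single j t)) :
    IsLogConcave f := by
  refine ⟨fun d => by simpa using (h 0 d).1 0, fun j d => ?_⟩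
  simpa [sub_eq_add_neg] using (h j d).2 0

end LaurentPolynomial

theorem coeff_LX_add_LX_add_one_pow (q : ℕ) (d : Fin 2 →₀ ℤ) :
    ((LX 2 0 1 + LX 2 1 1 + 1) ^ q).coeff d = binom q (d 0) * binom (q - d 0) (d 1) := by
  induction q generalizing d with
  | zero =>
    rw [pow_zero, AddMonoidAlgebra.one_def, AddMonoidAlgebra.coeff_single, Finsupp.single_apply,
      Nat.cast_zero, binom_zero_left, zero_sub]
    by_cases h0 : d 0 = 0
    · rw [if_pos h0, one_mul, h0, neg_zero, binom_zero_left]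
      exact if_congr (by simp [Finsupp.ext_iff, Fin.forall_fin_two, h0, eq_comm]) rfl rfl
    · rw [if_neg h0, zero_mul, if_neg]
      rintro rfl
      exact h0 rfl
  | succ q ih =>
    rw [pow_succ, coeff_mul_LX_add_LX_add_one, ih, ih, ih]
    simp only [Finsupp.coe_sub, Pi.sub_apply, Finsupp.single_eq_same,
      Finsupp.single_eq_of_ne zero_ne_one, Finsupp.single_eq_of_ne one_ne_zero, Nat.cast_succ,
      sub_zero]
    rw [binom_succ_left (Nat.cast_nonneg q), add_mul,
      show (q : ℤ) - (d 0 - 1) = q + 1 - d 0 by ring, binom_mul_binom_sub_succ le_rfl, add_assoc]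

theorem coeff_LX_add_one_pow_mul_pow (p q : ℕ) (d : Fin 2 →₀ ℤ) :
    ((LX 2 1 1 + 1) ^ p * (LX 2 0 1 + LX 2 1 1 + 1) ^ q).coeff d =
      binom q (d 0) * binom (p + q - d 0) (d 1) := by
  induction p generalizing d with
  | zero => simp [coeff_LX_add_LX_add_one_pow]
  | succ p ih =>
    rw [pow_succ, mul_right_comm, coeff_mul_LX_add_one, ih, ih]
    simp only [Finsupp.coe_sub, Pi.sub_apply, Finsupp.single_eq_same,
      Finsupp.single_eq_of_ne zero_ne_one, Nat.cast_succ, sub_zero]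
    rw [show (p : ℤ) + 1 + q - d 0 = p + q + 1 - d 0 by ring, binom_mul_binom_sub_succ (by omega)]

theorem isLogConcave_LX_add_one_pow_mul_pow (p q : ℕ) :
    IsLogConcave ((LX 2 1 1 + 1) ^ p * (LX 2 0 1 + LX 2 1 1 + 1) ^ q) := by
  refine isLogConcave_of_isLogConcaveSeq_coeff fun j d => ?_
  simp only [coeff_LX_add_one_pow_mul_pow]
  fin_cases j
  · simpa [sub_sub] using ((isLogConcaveSeq_binom_right q).comp_add_left (d 0)).mul
      ((isLogConcaveSeq_binom_left (d 1)).comp_sub_left (p + q - d 0))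
  · simpa using (IsLogConcaveSeq.const (binom_nonneg q (d 0))).mul
      ((isLogConcaveSeq_binom_right (p + q - d 0)).comp_add_left (d 1))

/-- The cluster monomial `((x2+1)/x1)^{m1} * ((x1+x2+1)/(x1*x2))^{m2}` of type `A₂`
is a log-concave Laurent polynomial. -/
theorem logConcave_A2_cluster_monomial_third (m1 m2 : ℕ) :
    IsLogConcave (((LX 2 1 1 + 1) * LX 2 0 (-1)) ^ m1 *
      ((LX 2 0 1 + LX 2 1 1 + 1) * (LX 2 0 (-1) * LX 2 1 (-1))) ^ m2) := by
  obtain ⟨e, he⟩ : ∃ e, LX 2 0 (-1) ^ m1 * (LX 2 0 (-1) * LX 2 1 (-1)) ^ m2 = Lmon 2 e :=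
    ⟨_, by simp only [LX, Lmon, AddMonoidAlgebra.single_mul_single, AddMonoidAlgebra.single_pow,
      one_pow, mul_one]; rfl⟩
  rw [mul_pow, mul_pow, mul_mul_mul_comm, he]
  exact (isLogConcave_LX_add_one_pow_mul_pow m1 m2).mul_Lmon e
end
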